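/- arXiv:2507.10885 — 8 statements merged into one kernel-verified Lean document; each statement's English description precedes it below -/
import Mathlib

section
/- Let f(x) be an irreducible polynomial of degree n with integer coefficients whose Galois group over ℚ is isomorphic to the symmetric group S_n. Then for every k with 1 ≤ k ≤ ⌊n/2⌋ and every choice of k distinct roots α_{i1}, …, α_{ik} of f in an algebraic closure of ℚ, the product α_{i1}⋯α_{ik} ≠ 1. -/
/-!
If the Galois group acts on the `n` roots as the full symmetric group, then for any `k` roots
with `0 < k < n` there are a root `α` among them and a root `β` outside them, and some
automorphism of the algebraic closure swaps `α` and `β` while fixing the other chosen roots.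
If the product of the chosen roots were `1`, applying this automorphism would give
`α * P = 1 = β * P` for the product `P` of the remaining ones, hence `α = β`.
-/

open Polynomial

theorem MonoidHom.apply_eq_self_of_mul_prod_eq_one {M : Type*} [CommMonoid M] (σ : M →* M)
    {a : M} {t : Multiset M} (hfix : ∀ x ∈ t, σ x = x) (h : a * t.prod = 1) : σ a = a := by
  have hσ : σ a * t.prod = 1 := by
    rw [← map_one σ, ← h, map_mul, map_multiset_prod, Multiset.map_congr rfl hfix,
      Multiset.map_id']
  exact left_inv_eq_right_inv hσ (by rwa [mul_comm] at h)

theorem Multiset.exists_mem_notMem_of_card_lt_card {α : Type*} {s t : Multiset α} (ht : t.Nodup)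
    (h : Multiset.card s < Multiset.card t) : ∃ e ∈ t, e ∉ s := by
  by_contra! hts
  exact (Multiset.card_le_card ((Multiset.le_iff_subset ht).mpr hts)).not_gt h

namespace Polynomial.Gal

variable {F E : Type*} [Field F] [Field E] [Algebra F E] {p : F[X]}
  [Fact ((p.map (algebraMap F E)).Splits)]

theorem galActionHom_bijective_of_card_eq (hsep : p.Separable)
    (hcard : Nat.card p.Gal = p.natDegree.factorial) : Function.Bijective (galActionHom p E) := by
  refine (Nat.bijective_iff_injective_and_card _).mpr ⟨galActionHom_injective p E, ?_⟩
  rw [hcard, Nat.card_perm, Nat.card_eq_fintype_card,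
    card_rootSet_eq_natDegree hsep Fact.out]

theorem exists_algEquiv_eq_perm [Normal F E] (hsurj : Function.Surjective (galActionHom p E))
    (π : Equiv.Perm (p.rootSet E)) : ∃ τ : Gal(E/F), ∀ x : p.rootSet E, τ x = π x := by
  obtain ⟨φ, rfl⟩ := hsurj π
  obtain ⟨τ, rfl⟩ := restrict_surjective p E φ
  exact ⟨τ, fun x => (galActionHom_restrict p E τ x).symm⟩

theorem prod_ne_one_of_galActionHom_surjective [Normal F E] (hsep : p.Separable)
    (hsurj : Function.Surjective (galActionHom p E)) {s : Multiset E} (hs : s ≤ p.aroots E)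
    (hs₀ : s ≠ 0) (hsn : Multiset.card s < p.natDegree) : s.prod ≠ 1 := by
  classical
  have hnodup : (p.aroots E).Nodup := nodup_roots hsep.map
  obtain ⟨α, hα⟩ := Multiset.exists_mem_of_ne_zero hs₀
  obtain ⟨t, rfl⟩ := Multiset.exists_cons_of_mem hα
  have hcard : Multiset.card (p.aroots E) = p.natDegree := by
    rw [← natDegree_map (algebraMap F E), (Fact.out : (p.map _).Splits).natDegree_eq_card_roots]
  obtain ⟨β, hβ, hβs⟩ := Multiset.exists_mem_notMem_of_card_lt_card hnodup (hcard ▸ hsn)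
  have hαt : α ∉ t := (Multiset.nodup_cons.mp (Multiset.nodup_of_le hs hnodup)).1
  have mem_rootSet_of_mem {x : E} (hx : x ∈ p.aroots E) : x ∈ p.rootSet E :=
    mem_rootSet'.mpr (mem_aroots'.mp hx)
  let a : p.rootSet E :=
    ⟨α, mem_rootSet_of_mem (Multiset.mem_of_le hs (Multiset.mem_cons_self α t))⟩
  let b : p.rootSet E := ⟨β, mem_rootSet_of_mem hβ⟩
  obtain ⟨τ, hτ⟩ := exists_algEquiv_eq_perm hsurj (Equiv.swap a b)
  intro hprod
  have hfix : ∀ x ∈ t, (τ : E →* E) x = x := fun x hx => by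
    have hxa : x ≠ α := ne_of_mem_of_not_mem hx hαt
    have hxb : x ≠ β := ne_of_mem_of_not_mem (Multiset.mem_cons_of_mem hx) hβs
    have hxR := mem_rootSet_of_mem (Multiset.mem_of_le hs (Multiset.mem_cons_of_mem hx))
    simpa [Equiv.swap_apply_of_ne_of_ne, a, b, hxa, hxb] using hτ ⟨x, hxR⟩
  have hτα : τ α = α := by
    simpa using
      (τ : E →* E).apply_eq_self_of_mul_prod_eq_one hfix (by rwa [← Multiset.prod_cons])
  have hτα' : τ α = β := by simpa [a, b] using hτ a
  exact hβs (hτα.symm.trans hτα' ▸ Multiset.mem_cons_self α t)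

end Polynomial.Gal

theorem regular_of_galois_symmetric (f : Polynomial ℤ) (n : ℕ) (hdeg : f.natDegree = n)
    (hirr : Irreducible (f.map (Int.castRingHom ℚ)))
    (hgal : Nonempty ((f.map (Int.castRingHom ℚ)).Gal ≃* Equiv.Perm (Fin n))) :
    ∀ k, 1 ≤ k → k ≤ n / 2 →
      ∀ s : Multiset (AlgebraicClosure ℚ),
        s ≤ (f.map (Int.castRingHom (AlgebraicClosure ℚ))).roots →
        Multiset.card s = k → s.prod ≠ 1 := by
  intro k hk1 hk2 s hs hcard
  set p := f.map (Int.castRingHom ℚ)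
  -- `AlgebraicClosure ℚ` is an algebraic closure only for its own `ℚ`-algebra structure,
  -- which is not reducibly defeq to `DivisionRing.toRatAlgebra`
  let : Algebra ℚ (AlgebraicClosure ℚ) := AlgebraicClosure.instAlgebra ℚ
  have : Fact ((p.map (algebraMap ℚ (AlgebraicClosure ℚ))).Splits) := ⟨IsAlgClosed.splits _⟩
  have hroots : (f.map (Int.castRingHom (AlgebraicClosure ℚ))).roots =
      p.aroots (AlgebraicClosure ℚ) := by
    rw [aroots_def, map_map, Subsingleton.elim (algebraMap ℚ _ |>.comp _) (Int.castRingHom _)]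
  have hpn : p.natDegree = n := by
    rw [natDegree_map_eq_of_injective (RingHom.injective_int _), hdeg]
  have hcardGal : Nat.card p.Gal = p.natDegree.factorial := by
    obtain ⟨e⟩ := hgal
    rw [Nat.card_congr e.toEquiv, Nat.card_perm, Nat.card_fin, hpn]
  refine Gal.prod_ne_one_of_galActionHom_surjective hirr.separable
    (Gal.galActionHom_bijective_of_card_eq hirr.separable hcardGal).2 (hroots ▸ hs) ?_ ?_
  · exact Multiset.card_pos.mp (by omega)
  · omega
end

section
/- Let K be a field and f(x) a doubly monic polynomial of degree n over K (i.e., monic with constant term (−1)^n). Let f*(x) be the signed reciprocal polynomial defined by f*(t) = (−1)^n t^n f(t^{-1}). Then for any k with 1 ≤ k ≤ ⌊n/2⌋, f is k-regular over K if and only if f* is k-regular over K. -/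
open Polynomial

/-- `f` is `k`-regular over `K`: no product of `k` roots of `f` (with distinct
indices, counting multiplicity) in an algebraic closure of `K` equals `1`. -/
def kRegular (K : Type*) [Field K] (f : Polynomial K) (k : ℕ) : Prop :=
  ∀ s : Multiset (AlgebraicClosure K),
    s ≤ (f.map (algebraMap K (AlgebraicClosure K))).roots →
    Multiset.card s = k → s.prod ≠ 1

/-- The signed reciprocal polynomial `f*(t) = (-1)^n t^n f(t⁻¹)` of a (doubly monic)
polynomial of degree `n`. -/
noncomputable def signedReciprocal {R : Type*} [CommRing R] (f : Polynomial R) : Polynomial R :=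
  (-1 : Polynomial R) ^ f.natDegree * f.reverse

/-!
The constant term is nonzero, so every root of `f` in the algebraic closure is nonzero, and there
`f.reverse`, hence also `f*`, has as roots exactly the inverses of the roots of `f`, with
multiplicity. The sub-multisets of size `k` of the two root multisets therefore correspond under
inversion, and `x⁻¹ = 1 ↔ x = 1`.
-/

namespace Multiset

variable {G : Type*} [InvolutiveInv G]

theorem le_map_inv_iff {s t : Multiset G} : s ≤ t.map (·⁻¹) ↔ s.map (·⁻¹) ≤ t := by
  rw [← map_le_map_iff inv_injective, map_map, inv_involutive.comp_self, map_id]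

theorem forall_le_map_inv_iff {t : Multiset G} {P : Multiset G → Prop} :
    (∀ s ≤ t.map (·⁻¹), P s) ↔ ∀ s ≤ t, P (s.map (·⁻¹)) :=
  ⟨fun h s hs => h _ (map_le_map hs),
    fun h s hs => by simpa [map_map, inv_involutive.comp_self] using h _ (le_map_inv_iff.1 hs)⟩

end Multiset

namespace Polynomial

theorem reverse_multiset_prod {R : Type*} [CommSemiring R] [NoZeroDivisors R]
    (s : Multiset R[X]) :
    s.prod.reverse = (s.map reverse).prod := by
  induction s using Multiset.induction with
  | empty => simpa using reverse_C (1 : R)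
  | cons p s ih => simp [reverse_mul_of_domain, ih]

theorem reverse_X_sub_C {F : Type*} [Field F] {a : F} (ha : a ≠ 0) :
    (X - C a).reverse = C (-a) * (X - C a⁻¹) := by
  have hX : (X : F[X]).reverse = 1 := by
    rw [← one_mul X, reverse_mul_X, ← C_1, reverse_C]
  rw [sub_eq_add_neg, ← C_neg, reverse_add_C, natDegree_X, hX, pow_one, mul_sub, ← C_mul,
    neg_mul, mul_inv_cancel₀ ha]
  simp only [map_neg, map_one]
  ring

theorem roots_reverse_of_splits {F : Type*} [Field F] {p : F[X]} (hp : p.Splits)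
    (h0 : p.coeff 0 ≠ 0) : p.reverse.roots = p.roots.map (·⁻¹) := by
  have hroots : ∀ a ∈ p.roots, a ≠ 0 := by
    rintro a ha rfl
    exact h0 (coeff_zero_eq_eval_zero p ▸ isRoot_of_mem_roots ha)
  have hp0 : p ≠ 0 := fun h => h0 (by simp [h])
  have hfactor : p.reverse =
      C (p.leadingCoeff * (p.roots.map (-·)).prod) *
        ((p.roots.map (·⁻¹)).map (X - C ·)).prod := by
    conv_lhs => rw [hp.eq_prod_roots]
    rw [reverse_mul_of_domain, reverse_C, reverse_multiset_prod, Multiset.map_map,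
      Function.comp_def,
      Multiset.map_congr rfl (g := fun a => C (-a) * (X - C a⁻¹))
        fun a ha => reverse_X_sub_C (hroots a ha), Multiset.prod_map_mul, C_mul, mul_assoc,
      map_multiset_prod, Multiset.map_map, Multiset.map_map]
    rfl
  rw [hfactor, roots_C_mul, roots_multiset_prod_X_sub_C]
  refine mul_ne_zero (leadingCoeff_ne_zero.2 hp0) (Multiset.prod_ne_zero fun h => ?_)
  obtain ⟨a, ha, ha0⟩ := Multiset.mem_map.1 h
  exact hroots a ha (neg_eq_zero.1 ha0)

theorem roots_signedReciprocal {F : Type*} [Field F] (p : F[X]) :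
    (signedReciprocal p).roots = p.reverse.roots := by
  rcases neg_one_pow_eq_or F[X] p.natDegree with h | h <;> simp [signedReciprocal, h, roots_neg]

theorem map_signedReciprocal {R S : Type*} [CommRing R] [CommRing S] {φ : R →+* S}
    (hφ : Function.Injective φ) (p : R[X]) :
    (signedReciprocal p).map φ = signedReciprocal (p.map φ) := by
  simp only [signedReciprocal, reverse, Polynomial.map_mul, Polynomial.map_pow, Polynomial.map_neg,
    Polynomial.map_one, natDegree_map_eq_of_injective hφ, reflect_map]

end Polynomial

theorem kRegular_iff_of_roots_eq_map_inv {K : Type*} [Field K] {f g : K[X]} (k : ℕ)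
    (h : (g.map (algebraMap K (AlgebraicClosure K))).roots =
      (f.map (algebraMap K (AlgebraicClosure K))).roots.map (·⁻¹)) :
    kRegular K f k ↔ kRegular K g k := by
  rw [kRegular, kRegular, h, Multiset.forall_le_map_inv_iff]
  simp [Multiset.prod_map_inv']

theorem kRegular_iff_signedReciprocal_general {K : Type*} [Field K] (f : Polynomial K) (n : ℕ)
    (hdm : f.coeff 0 = (-1) ^ n)
    (k : ℕ) :
    kRegular K f k ↔ kRegular K (signedReciprocal f) k := by
  have h0 : (f.map (algebraMap K (AlgebraicClosure K))).coeff 0 ≠ 0 := by simp [hdm]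
  refine kRegular_iff_of_roots_eq_map_inv k ?_
  rw [map_signedReciprocal (algebraMap K _).injective, roots_signedReciprocal,
    roots_reverse_of_splits (IsAlgClosed.splits _) h0]

theorem kRegular_iff_signedReciprocal {K : Type*} [Field K] (f : Polynomial K) (n : ℕ)
    (hmonic : f.Monic) (hdeg : f.natDegree = n) (hdm : f.coeff 0 = (-1) ^ n)
    (k : ℕ) (hk1 : 1 ≤ k) (hk2 : k ≤ n / 2) :
    kRegular K f k ↔ kRegular K (signedReciprocal f) k :=
  kRegular_iff_signedReciprocal_general f n hdm k
end

section
/- Let p be a prime and f(x) an irreducible primitive polynomial of degree n ≥ 2 over the field 𝔽_p with nonzero constant term. Then for every k with 1 ≤ k ≤ ⌊n/2⌋ and every choice of k roots of f with distinct indices in an algebraic closure of 𝔽_p, the product of those roots is not equal to 1. -/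
/-!
If `α` is a root of `f` of multiplicative order `q ^ n - 1`, the Frobenius orbit
`α, α ^ q, …, α ^ q ^ (n - 1)` consists of `n` roots, distinct because the order exceeds every
difference `q ^ j - q ^ i`, hence of all roots of `f`. A product
of `k` of them is `α ^ m` with `m` a sum of `k` distinct powers `q ^ i`, `i < n`; for `0 < k < n`
this gives `0 < m < q ^ n - 1`, so `α ^ m ≠ 1`.
-/

open Polynomial

theorem Multiset.exists_eq_map_of_le_map {α β : Type*} {f : α → β} {s : Multiset β}
    {t : Multiset α} (h : s ≤ t.map f) : ∃ u ≤ t, s = u.map f := by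
  classical
  induction t using Multiset.induction_on generalizing s with
  | empty => exact ⟨0, le_rfl, by simpa using h⟩
  | cons a t ih =>
    rw [Multiset.map_cons] at h
    by_cases ha : f a ∈ s
    · obtain ⟨s', rfl⟩ := Multiset.exists_cons_of_mem ha
      obtain ⟨u, hu, rfl⟩ := ih ((Multiset.cons_le_cons_iff _).1 h)
      exact ⟨a ::ₘ u, Multiset.cons_le_cons a hu, (Multiset.map_cons f a u).symm⟩
    · obtain ⟨u, hu, rfl⟩ := ih ((Multiset.le_cons_of_notMem ha).1 h)
      exact ⟨u, hu.trans (Multiset.le_cons_self t a), rfl⟩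

theorem Nat.sum_pow_lt_pow_sub_one {q n : ℕ} (hq : 1 < q) {T : Finset ℕ}
    (hT : T ⊂ Finset.range n) : ∑ i ∈ T, q ^ i < q ^ n - 1 := by
  obtain ⟨j, hj, hjT⟩ := Finset.exists_of_ssubset hT
  have hlt : ∑ i ∈ insert j T, q ^ i < q ^ n := Nat.geomSum_lt hq fun i hi =>
    Finset.mem_range.1 ((Finset.insert_subset hj hT.subset) hi)
  rw [Finset.sum_insert hjT] at hlt
  have hone : 1 ≤ q ^ j := Nat.one_le_pow j q (by omega)
  omega

section Monoid

variable {M : Type*} [Monoid M] {x : M} {q n : ℕ}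

theorem pow_pow_injOn_of_orderOf_eq (hq : 1 < q) (hx : orderOf x = q ^ n - 1) :
    Set.InjOn (fun i => x ^ q ^ i) (Set.Iio n) := by
  intro i hi j hj hij
  wlog hle : i ≤ j generalizing i j
  · exact (this hj hi hij.symm (le_of_not_ge hle)).symm
  have hpow_le : q ^ i ≤ q ^ j := Nat.pow_le_pow_right (by omega) hle
  have hpow_lt : q ^ j < q ^ n := Nat.pow_lt_pow_right hq hj
  have hone : 1 ≤ q ^ i := Nat.one_le_pow i q (by omega)
  have hfin : IsOfFinOrder x := orderOf_pos_iff.1 (by omega)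
  have hdvd : q ^ n - 1 ∣ q ^ j - q ^ i :=
    hx ▸ (Nat.modEq_iff_dvd' hpow_le).1 (hfin.pow_eq_pow_iff_modEq.1 hij)
  have hdiff : q ^ j - q ^ i = 0 := Nat.eq_zero_of_dvd_of_lt hdvd (by omega)
  exact Nat.pow_right_injective hq (show q ^ i = q ^ j by omega)

theorem pow_sum_pow_ne_one_of_orderOf_eq (hq : 1 < q) (hx : orderOf x = q ^ n - 1)
    {T : Finset ℕ} (hne : T.Nonempty) (hT : T ⊂ Finset.range n) : x ^ ∑ i ∈ T, q ^ i ≠ 1 := by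
  intro h
  have hdvd : q ^ n - 1 ∣ ∑ i ∈ T, q ^ i := hx ▸ orderOf_dvd_of_pow_eq_one h
  have hpos : 0 < ∑ i ∈ T, q ^ i := Finset.sum_pos (fun i _ => by positivity) hne
  exact (Nat.le_of_dvd hpos hdvd).not_gt (Nat.sum_pow_lt_pow_sub_one hq hT)

end Monoid

section FiniteField

variable {K L : Type*} [Field K] [Fintype K]

theorem aeval_pow_card_pow [CommSemiring L] [Algebra K L] (f : K[X]) (x : L) (i : ℕ) :
    aeval (x ^ Fintype.card K ^ i) f = aeval x f ^ Fintype.card K ^ i := by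
  induction i with
  | zero => simp
  | succ i ih =>
    rw [pow_succ, pow_mul, pow_mul, ← ih, ← expand_aeval, FiniteField.expand_card, map_pow]

variable [CommRing L] [IsDomain L] [Algebra K L] {f : K[X]} {n : ℕ} {α : L}

theorem roots_map_eq_map_range_of_orderOf_eq (hn : f.natDegree = n) (hα : aeval α f = 0)
    (hord : orderOf α = Fintype.card K ^ n - 1) :
    (f.map (algebraMap K L)).roots = (Multiset.range n).map (α ^ Fintype.card K ^ ·) := by
  have hnodup : ((Multiset.range n).map (α ^ Fintype.card K ^ ·)).Nodup :=
    (Multiset.nodup_range n).map_on fun i hi j hj =>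
      pow_pow_injOn_of_orderOf_eq Fintype.one_lt_card hord (Multiset.mem_range.1 hi)
        (Multiset.mem_range.1 hj)
  symm
  refine Multiset.eq_of_le_of_card_le ((Multiset.le_iff_subset hnodup).2 fun x hx => ?_) ?_
  · obtain ⟨i, hi, rfl⟩ := Multiset.mem_map.1 hx
    have hf : f ≠ 0 := by
      rintro rfl
      simp [← hn] at hi
    rw [mem_roots (map_ne_zero hf), IsRoot, eval_map_algebraMap, aeval_pow_card_pow, hα,
      zero_pow (by positivity)]
  · simpa [hn] using (f.map (algebraMap K L)).card_roots'

theorem prod_ne_one_of_le_roots_map (hn : f.natDegree = n) (hα : aeval α f = 0)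
    (hord : orderOf α = Fintype.card K ^ n - 1) {s : Multiset L}
    (hs : s ≤ (f.map (algebraMap K L)).roots) (hpos : 0 < Multiset.card s)
    (hlt : Multiset.card s < n) : s.prod ≠ 1 := by
  rw [roots_map_eq_map_range_of_orderOf_eq hn hα hord] at hs
  obtain ⟨u, hu, rfl⟩ := Multiset.exists_eq_map_of_le_map hs
  rw [Multiset.card_map] at hpos hlt
  let T : Finset ℕ := ⟨u, Multiset.nodup_of_le hu (Multiset.nodup_range n)⟩
  have hT : T ⊂ Finset.range n := Finset.val_lt_iff.1 <| lt_of_le_of_ne hu fun h =>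
    hlt.ne ((congrArg Multiset.card h).trans (Multiset.card_range n))
  have hprod : (u.map (α ^ Fintype.card K ^ ·)).prod = α ^ ∑ i ∈ T, Fintype.card K ^ i :=
    Finset.prod_pow_eq_pow_sum T _ α
  rw [hprod]
  exact pow_sum_pow_ne_one_of_orderOf_eq Fintype.one_lt_card hord (Finset.card_pos.1 hpos) hT

end FiniteField

theorem regular_of_irreducible_primitive_general (p : ℕ) [Fact p.Prime]
    (f : Polynomial (ZMod p)) (n : ℕ) (hn : f.natDegree = n)
    (hprim : ∀ x : AlgebraicClosure (ZMod p),
      (f.map (algebraMap (ZMod p) (AlgebraicClosure (ZMod p)))).IsRoot x →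
      orderOf x = p ^ n - 1) :
    ∀ k, 1 ≤ k → k ≤ n / 2 → kRegular (ZMod p) f k := by
  intro k hk hkn s hs hcard
  obtain ⟨α, hαs⟩ := Multiset.card_pos_iff_exists_mem.1 (hcard ▸ hk)
  have hroot := isRoot_of_mem_roots (Multiset.mem_of_le hs hαs)
  have hord : orderOf α = Fintype.card (ZMod p) ^ n - 1 := by
    rw [ZMod.card]
    exact hprim α hroot
  rw [IsRoot, eval_map_algebraMap] at hroot
  exact prod_ne_one_of_le_roots_map hn hroot hord hs (by omega) (by omega)

theorem regular_of_irreducible_primitive (p : ℕ) [Fact p.Prime]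
    (f : Polynomial (ZMod p)) (n : ℕ) (hn : f.natDegree = n) (h2 : 2 ≤ n)
    (hirr : Irreducible f) (hc : f.coeff 0 ≠ 0)
    (hprim : ∀ x : AlgebraicClosure (ZMod p),
      (f.map (algebraMap (ZMod p) (AlgebraicClosure (ZMod p)))).IsRoot x →
      orderOf x = p ^ n - 1) :
    ∀ k, 1 ≤ k → k ≤ n / 2 → kRegular (ZMod p) f k :=
  regular_of_irreducible_primitive_general p f n hn hprim
end

section
/- Let f(x) be a polynomial of degree n ≥ 2 over 𝔽_2 with nonzero constant term. If f is k-regular over 𝔽_2 for every k with 1 ≤ k ≤ ⌊n/2⌋, then f is irreducible over 𝔽_2. -/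
open Polynomial

/-!
If `f` were reducible it would have a monic factor `q` of degree `d ∈ [1, n/2]`. Over `𝔽₂` the
constant term of `q` divides that of `f`, so it is `1`; since `-1 = 1`, Vieta's formula says the
`d` roots of `q`, which are among the roots of `f`, multiply to `1`, contradicting `d`-regularity.
-/

namespace Polynomial

theorem not_kRegular_of_monic_dvd {K : Type*} [Field K] {f q : K[X]} (hf : f ≠ 0)
    (hq : q.Monic) (hqf : q ∣ f) (hq0 : (-1) ^ q.natDegree * q.coeff 0 = 1) :
    ¬ kRegular K f q.natDegree := by
  set Q := q.map (algebraMap K (AlgebraicClosure K))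
  have hQ : Q.Splits := IsAlgClosed.splits Q
  have hcard : Multiset.card Q.roots = q.natDegree := by
    rw [← hQ.natDegree_eq_card_roots, natDegree_map]
  have hprod : Q.roots.prod = 1 := by
    have h := hQ.coeff_zero_eq_prod_roots_of_monic (hq.map _)
    rw [coeff_map, natDegree_map] at h
    have := congrArg (algebraMap K (AlgebraicClosure K)) hq0
    rw [map_mul, map_pow, map_neg, map_one, h, ← mul_assoc, ← mul_pow, neg_one_mul, neg_neg,
      one_pow, one_mul] at this
    exact this
  exact fun hreg => hreg Q.roots (roots.le_of_dvd (map_ne_zero hf) (map_dvd _ hqf)) hcard hprod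

theorem coeff_zero_ne_zero_of_dvd {R : Type*} [CommSemiring R] {f q : R[X]} (hqf : q ∣ f)
    (hf : f.coeff 0 ≠ 0) : q.coeff 0 ≠ 0 := by
  obtain ⟨r, rfl⟩ := hqf
  rw [mul_coeff_zero] at hf
  exact left_ne_zero_of_mul hf

end Polynomial

theorem ZMod.eq_one_of_ne_zero_two {x : ZMod 2} (hx : x ≠ 0) : x = 1 := by
  revert x; decide

theorem irreducible_of_regular_F2 (f : Polynomial (ZMod 2)) (n : ℕ)
    (hn : f.natDegree = n) (h2 : 2 ≤ n) (hc : f.coeff 0 ≠ 0)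
    (hreg : ∀ k, 1 ≤ k → k ≤ n / 2 → kRegular (ZMod 2) f k) :
    Irreducible f := by
  have hf0 : f ≠ 0 := by rintro rfl; simp at hc
  have hfu : ¬ IsUnit f := fun h => by have := natDegree_eq_zero_of_isUnit h; omega
  refine (irreducible_iff_lt_natDegree_lt hf0 hfu).2 fun q hq hdeg hqf => ?_
  rw [Finset.mem_Ioc, hn] at hdeg
  have hq0 : q.coeff 0 = 1 := ZMod.eq_one_of_ne_zero_two (coeff_zero_ne_zero_of_dvd hqf hc)
  refine not_kRegular_of_monic_dvd hf0 hq hqf ?_ (hreg _ hdeg.1 hdeg.2)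
  rw [hq0, CharTwo.neg_eq, one_pow, one_mul]
end

section
/- A doubly monic integer polynomial f(x) of degree n is a Cappell-Shaneson polynomial if and only if its signed reciprocal f*(x) is a Cappell-Shaneson polynomial. -/
open Polynomial

noncomputable def compound {R : Type*} [CommRing R] {n : ℕ} (k : ℕ)
    (A : Matrix (Fin n) (Fin n) R) :
    Matrix {s : Finset (Fin n) // s.card = k} {s : Finset (Fin n) // s.card = k} R :=
  Matrix.of fun s t =>
    (Matrix.of fun i j : Fin k =>
      A (s.1.orderIsoOfFin s.2 i).1 (t.1.orderIsoOfFin t.2 j).1).det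

/-- The companion matrix of a monic polynomial. -/
noncomputable def companion {R : Type*} [CommRing R] (f : Polynomial R) :
    Matrix (Fin f.natDegree) (Fin f.natDegree) R :=
  Matrix.of fun i j =>
    if (i : ℕ) + 1 = f.natDegree then -f.coeff j
    else if (j : ℕ) = (i : ℕ) + 1 then 1 else 0

/-- `f` is a Cappell-Shaneson polynomial: it is doubly monic (so its companion
matrix lies in `SL(n,ℤ)`) and the companion matrix `A` satisfies
`det(I - ⋀^k A) = ±1` for all `1 ≤ k ≤ ⌊n/2⌋`. -/
def IsCSPoly (f : Polynomial ℤ) : Prop :=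
  f.Monic ∧ f.coeff 0 = (-1) ^ f.natDegree ∧
    ∀ k, 1 ≤ k → k ≤ f.natDegree / 2 →
      (1 - compound k (companion f)).det = 1 ∨
      (1 - compound k (companion f)).det = -1

/-! `compound k A` is the matrix of `⋀^k A` in the basis of wedges of standard basis vectors, so
`compound k` is multiplicative and `det (1 - compound k A)` is invariant under conjugating `A`.
Reversing the order of the basis turns the companion matrix of `f*` into the inverse of the
companion matrix `A` of `f` (this is where `f(0) = (-1)^n` enters). Since `1 - Y = -Y (1 - X)`
whenever `X Y = 1`, `det (1 - ⋀^k A)` is a unit iff `det (1 - ⋀^k A⁻¹)` is. As `f** = f`, the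
implication from `f` to `f*` suffices. -/
section compound

open exteriorPower

variable {R : Type*} [CommRing R] {n : ℕ}

def subtypeCardEquivPowersetCard (ι : Type*) (k : ℕ) :
    {s : Finset ι // s.card = k} ≃ Set.powersetCard ι k :=
  Equiv.subtypeEquivRight fun _ => Set.powersetCard.mem_iff.symm

theorem compound_eq_toMatrix_exteriorPower_map (k : ℕ) (A : Matrix (Fin n) (Fin n) R) :
    compound k A = (LinearMap.toMatrix ((Pi.basisFun R (Fin n)).exteriorPower k)
      ((Pi.basisFun R (Fin n)).exteriorPower k) (map k (Matrix.toLin' A))).submatrix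
      (subtypeCardEquivPowersetCard (Fin n) k) (subtypeCardEquivPowersetCard (Fin n) k) := by
  ext s t
  rw [Matrix.submatrix_apply, LinearMap.toMatrix_apply, basis_apply, map_apply_ιMulti_family,
    basis_repr_apply, ιMulti_family, ιMultiDual_apply_ιMulti, ← Matrix.det_transpose, compound,
    Matrix.of_apply]
  congr 1
  ext i j
  simp [Set.powersetCard.ofFinEmbEquiv_symm_apply, subtypeCardEquivPowersetCard]

theorem compound_mul (k : ℕ) (A B : Matrix (Fin n) (Fin n) R) :
    compound k (A * B) = compound k A * compound k B := by
  rw [compound_eq_toMatrix_exteriorPower_map, compound_eq_toMatrix_exteriorPower_map,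
    compound_eq_toMatrix_exteriorPower_map, Matrix.toLin'_mul, exteriorPower.map_comp,
    LinearMap.toMatrix_comp ((Pi.basisFun R (Fin n)).exteriorPower k)
      ((Pi.basisFun R (Fin n)).exteriorPower k) ((Pi.basisFun R (Fin n)).exteriorPower k),
    Matrix.submatrix_mul_equiv]

theorem compound_one (k : ℕ) : compound k (1 : Matrix (Fin n) (Fin n) R) = 1 := by
  rw [compound_eq_toMatrix_exteriorPower_map, Matrix.toLin'_one, exteriorPower.map_id,
    LinearMap.toMatrix_id, Matrix.submatrix_one_equiv]

end compound

section conj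
variable {R : Type*} [CommRing R]

theorem det_one_sub_compound_conj {n : ℕ} (k : ℕ) {P Q : Matrix (Fin n) (Fin n) R}
    (hPQ : P * Q = 1) (A : Matrix (Fin n) (Fin n) R) :
    (1 - compound k (P * A * Q)).det = (1 - compound k A).det := by
  have hPQ' : compound k P * compound k Q = 1 := by rw [← compound_mul, hPQ, compound_one]
  have hQP' : compound k Q * compound k P = 1 := mul_eq_one_comm.mp hPQ'
  calc (1 - compound k (P * A * Q)).det
      = (compound k P * (1 - compound k A) * compound k Q).det := by
        rw [Matrix.mul_sub, Matrix.sub_mul, Matrix.mul_one, hPQ', compound_mul, compound_mul]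
    _ = (1 - compound k A).det := Matrix.det_conj_of_mul_eq_one hPQ' hQP'

theorem det_one_sub_compound_submatrix {m n : ℕ} (k : ℕ) (e : Fin n ≃ Fin m)
    (A : Matrix (Fin m) (Fin m) R) :
    (1 - compound k (A.submatrix e e)).det = (1 - compound k A).det := by
  obtain rfl : n = m := by simpa using Fintype.card_congr e
  have hA : A.submatrix e e = e.toPEquiv.toMatrix * A * e.symm.toPEquiv.toMatrix := by
    rw [PEquiv.toMatrix_toPEquiv_mul, PEquiv.mul_toMatrix_toPEquiv, Matrix.submatrix_submatrix,
      Equiv.symm_symm]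
    rfl
  rw [hA]
  refine det_one_sub_compound_conj k ?_ A
  rw [← PEquiv.toMatrix_trans, ← Equiv.toPEquiv_trans, Equiv.self_trans_symm,
    Equiv.toPEquiv_refl, PEquiv.toMatrix_refl]

theorem isUnit_det_one_sub_of_mul_eq_one {ι : Type*} [Fintype ι] [DecidableEq ι]
    {X Y : Matrix ι ι R} (hXY : X * Y = 1) (hX : IsUnit (1 - X).det) : IsUnit (1 - Y).det := by
  have hYX : Y * X = 1 := mul_eq_one_comm.mp hXY
  have hY : IsUnit Y.det := Matrix.isUnit_det_of_left_inverse hXY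
  have : 1 - Y = -Y * (1 - X) := by rw [neg_mul, Matrix.mul_sub, hYX, Matrix.mul_one, neg_sub]
  rw [this, Matrix.det_mul, Matrix.det_neg]
  exact ((isUnit_neg_one.pow _).mul hY).mul hX

end conj

section signedReciprocal
variable {R : Type*} [CommRing R] {f : R[X]}

theorem coeff_signedReciprocal (f : R[X]) (i : ℕ) :
    (signedReciprocal f).coeff i = (-1) ^ f.natDegree * f.coeff (revAt f.natDegree i) := by
  rw [signedReciprocal, ← C_1, ← C_neg, ← C_pow, coeff_C_mul, coeff_reverse]

theorem natDegree_signedReciprocal [Nontrivial R] (h0 : IsUnit (f.coeff 0)) :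
    (signedReciprocal f).natDegree = f.natDegree := by
  rw [signedReciprocal, ← C_1, ← C_neg, ← C_pow,
    natDegree_C_mul_of_isUnit (isUnit_neg_one.pow _), reverse_natDegree,
    natTrailingDegree_eq_zero.mpr (Or.inr h0.ne_zero), Nat.sub_zero]

theorem signedReciprocal_signedReciprocal [Nontrivial R] (h0 : IsUnit (f.coeff 0)) :
    signedReciprocal (signedReciprocal f) = f := by
  ext i
  rw [coeff_signedReciprocal, natDegree_signedReciprocal h0, coeff_signedReciprocal, revAt_invol,
    ← mul_assoc, ← pow_add, Even.neg_one_pow ⟨_, rfl⟩, one_mul]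

theorem monic_signedReciprocal (h0 : f.coeff 0 = (-1) ^ f.natDegree) :
    (signedReciprocal f).Monic := by
  nontriviality R
  have hu : IsUnit (f.coeff 0) := h0 ▸ isUnit_neg_one.pow _
  rw [Monic, leadingCoeff, natDegree_signedReciprocal hu, coeff_signedReciprocal, revAt_le le_rfl,
    Nat.sub_self, h0, ← pow_add, Even.neg_one_pow ⟨_, rfl⟩]

theorem coeff_zero_signedReciprocal (hmonic : f.Monic) :
    (signedReciprocal f).coeff 0 = (-1) ^ f.natDegree := by
  rw [coeff_signedReciprocal, revAt_zero, hmonic.coeff_natDegree, mul_one]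

end signedReciprocal

def finRevCongr {m n : ℕ} (h : m = n) : Fin m ≃ Fin n := Fin.revPerm.trans (finCongr h)

theorem val_finRevCongr {m n : ℕ} (h : m = n) (i : Fin m) :
    (finRevCongr h i : ℕ) = m - (i + 1) := by
  simp only [finRevCongr, Equiv.trans_apply, Fin.revPerm_apply, finCongr_apply, Fin.val_cast,
    Fin.val_rev]

section companion
variable {R : Type*} [CommRing R] {f : R[X]}

theorem companion_apply (i j : Fin f.natDegree) :
    companion f i j = if (i : ℕ) + 1 = f.natDegree then -f.coeff j
      else if (j : ℕ) = i + 1 then 1 else 0 := rfl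

theorem companion_signedReciprocal_submatrix_apply
    (hd : f.natDegree = (signedReciprocal f).natDegree) (j l : Fin f.natDegree) :
    (companion (signedReciprocal f)).submatrix (finRevCongr hd) (finRevCongr hd) j l =
      if (j : ℕ) = 0 then -((-1) ^ f.natDegree * f.coeff (l + 1))
      else if (l : ℕ) + 1 = j then 1 else 0 := by
  have hj := j.isLt
  have hl := l.isLt
  have hrow : f.natDegree - (j + 1) + 1 = f.natDegree ↔ (j : ℕ) = 0 := by omega
  have hcol : f.natDegree - (l + 1) = f.natDegree - (j + 1) + 1 ↔ (l : ℕ) + 1 = j := by omega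
  have hrev : f.natDegree - (f.natDegree - (l + 1)) = l + 1 := by omega
  rw [Matrix.submatrix_apply, companion_apply, val_finRevCongr, val_finRevCongr, ← hd,
    coeff_signedReciprocal, revAt_le (by omega)]
  simp only [hrow, hcol, hrev]

theorem companion_mul_companion_signedReciprocal_submatrix (hmonic : f.Monic)
    (h0 : f.coeff 0 = (-1) ^ f.natDegree) (hd : f.natDegree = (signedReciprocal f).natDegree) :
    companion f * (companion (signedReciprocal f)).submatrix (finRevCongr hd) (finRevCongr hd) =
      1 := by
  ext i l
  have hi := i.isLt
  have hl := l.isLt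
  rw [Matrix.mul_apply, Matrix.one_apply]
  simp only [companion_signedReciprocal_submatrix_apply, companion_apply, Fin.ext_iff]
  rw [Fin.sum_univ_eq_sum_range (fun j => (if (i : ℕ) + 1 = f.natDegree then -f.coeff j
      else if j = i + 1 then 1 else 0) * if j = 0 then -((-1) ^ f.natDegree * f.coeff (l + 1))
      else if (l : ℕ) + 1 = j then 1 else 0)]
  by_cases hlast : (i : ℕ) + 1 = f.natDegree
  · -- `-f.coeff 0 = -(-1)^n` times the top entry gives `f.coeff (l + 1)`, cancelled by the
    -- subdiagonal entry in row `l + 1` unless `l` is the last column, where `f.coeff n = 1`.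
    obtain ⟨m, hm⟩ : ∃ m, f.natDegree = m + 1 := ⟨i, hlast.symm⟩
    have hsq : ((-1 : R) ^ f.natDegree) * (-1) ^ f.natDegree = 1 := by
      rw [← pow_add, Even.neg_one_pow ⟨_, rfl⟩]
    simp only [if_pos hlast]
    rw [show Finset.range f.natDegree = Finset.range (m + 1) by rw [hm],
      Finset.sum_range_succ']
    simp only [Nat.add_right_cancel_iff, Nat.add_one_ne_zero, if_false, if_true, mul_ite, mul_one,
      mul_zero]
    rw [Finset.sum_ite_eq, h0]
    by_cases hil : (i : ℕ) = l
    · rw [if_neg (Finset.mem_range.not.mpr (by omega)), if_pos hil, ← hil, hlast,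
        hmonic.coeff_natDegree]
      linear_combination hsq
    · rw [if_pos (Finset.mem_range.mpr (by omega)), if_neg hil]
      linear_combination f.coeff (l + 1) * hsq
  · simp only [if_neg hlast, ite_mul, one_mul, zero_mul]
    rw [Finset.sum_ite_eq', if_pos (Finset.mem_range.mpr (by omega)), if_neg (by omega)]
    simp only [Nat.add_right_cancel_iff, eq_comm]

end companion

theorem isCSPoly_signedReciprocal {f : ℤ[X]} (hf : IsCSPoly f) :
    IsCSPoly (signedReciprocal f) := by
  obtain ⟨hmonic, h0, hdet⟩ := hf
  have hd : f.natDegree = (signedReciprocal f).natDegree :=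
    (natDegree_signedReciprocal (h0 ▸ isUnit_neg_one.pow _)).symm
  refine ⟨monic_signedReciprocal h0, hd ▸ coeff_zero_signedReciprocal hmonic,
    fun k hk hkn => ?_⟩
  rw [← Int.isUnit_iff, ← det_one_sub_compound_submatrix k (finRevCongr hd)]
  refine isUnit_det_one_sub_of_mul_eq_one ?_ (Int.isUnit_iff.mpr (hdet k hk (hd ▸ hkn)))
  rw [← compound_mul, companion_mul_companion_signedReciprocal_submatrix hmonic h0, compound_one]

theorem csPoly_iff_signedReciprocal_general (f : Polynomial ℤ) (n : ℕ)
    (hdm : f.coeff 0 = (-1) ^ n) :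
    IsCSPoly f ↔ IsCSPoly (signedReciprocal f) := by
  refine ⟨isCSPoly_signedReciprocal, fun h => ?_⟩
  simpa only [signedReciprocal_signedReciprocal (hdm ▸ isUnit_neg_one.pow n)]
    using isCSPoly_signedReciprocal h

theorem csPoly_iff_signedReciprocal (f : Polynomial ℤ) (n : ℕ)
    (hmonic : f.Monic) (hdeg : f.natDegree = n) (hdm : f.coeff 0 = (-1) ^ n) :
    IsCSPoly f ↔ IsCSPoly (signedReciprocal f) :=
  csPoly_iff_signedReciprocal_general f n hdm
end

section
/- For every even integer n > 1, the polynomial f(x) = x^{2n+2} − x^n + 1 over ℚ is 1-regular and 2-regular: no root equals 1, and no product of two roots with distinct indices (counting multiplicity) equals 1. -/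
open Polynomial

theorem one_and_two_regular_example (n : ℕ) (hev : Even n) (hn : 1 < n) :
    kRegular ℚ (X ^ (2 * n + 2) - X ^ n + 1) 1 ∧
    kRegular ℚ (X ^ (2 * n + 2) - X ^ n + 1) 2 := by
  set K := AlgebraicClosure ℚ
  have hroot : ∀ α : K,
      α ∈ ((X ^ (2 * n + 2) - X ^ n + 1 : ℚ[X]).map (algebraMap ℚ K)).roots →
      α ^ (2 * n + 2) - α ^ n + 1 = 0 := by
    intro α h
    have h2 := (mem_roots'.mp h).2
    simpa [IsRoot, Polynomial.map_add, Polynomial.map_sub, Polynomial.map_pow] using h2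
  -- no root equals 1 or -1 (in fact: α^2 = 1 is impossible for a root)
  have hsq : ∀ α : K,
      α ∈ ((X ^ (2 * n + 2) - X ^ n + 1 : ℚ[X]).map (algebraMap ℚ K)).roots →
      α ^ 2 ≠ 1 := by
    intro α hα hα2
    obtain ⟨m, hm⟩ := hev
    have h1 : α ^ n = 1 := by
      rw [hm, show m + m = 2 * m by ring, pow_mul, hα2, one_pow]
    have h2 : α ^ (2 * n + 2) = 1 := by
      rw [show 2 * n + 2 = 2 * (n + 1) by ring, pow_mul, hα2, one_pow]
    have := hroot α hα
    rw [h1, h2] at this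
    simp at this
  constructor
  · intro s hs hcard hprod
    obtain ⟨α, rfl⟩ := Multiset.card_eq_one.mp hcard
    have hα : α ∈ _ := Multiset.mem_of_le hs (Multiset.mem_singleton_self α)
    have hα2 : α ^ 2 = 1 := by
      rw [Multiset.prod_singleton] at hprod
      rw [hprod]; ring
    exact hsq α hα hα2
  · intro s hs hcard hprod
    obtain ⟨α, β, rfl⟩ := Multiset.card_eq_two.mp hcard
    have hα : α ∈ _ := Multiset.mem_of_le hs (by simp)
    have hβ : β ∈ _ := Multiset.mem_of_le hs (by simp)
    have eα := hroot α hα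
    have eβ := hroot β hβ
    have hab : α * β = 1 := by simpa using hprod
    have h1 : (α * β) ^ n = 1 := by rw [hab, one_pow]
    have h2 : (α * β) ^ (2 * n + 2) = 1 := by rw [hab, one_pow]
    have hane : α ≠ 0 := by
      rintro rfl
      rw [zero_pow (by omega), zero_pow (by omega)] at eα
      simp at eα
    have hkey : α ^ n * (α ^ 2 - 1) = 0 := by
      linear_combination eα - α ^ (2 * n + 2) * eβ + h2 - α ^ (n + 2) * h1
    have : α ^ 2 - 1 = 0 := by
      rcases mul_eq_zero.mp hkey with h | h
      · exact absurd h (pow_ne_zero n hane)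
      · exact h
    exact hsq α hα (by linear_combination this)
end

section
/- The polynomial f(x) = x^6 + x^5 − x^4 − 2x^3 + x + 1 over ℚ is 3-regular: no product of three of its roots with distinct indices equals 1. -/
/-!
If three roots `a, b, c` of `f` had product `1`, then `(X - a)(X - b)(X - c)` would be a monic
cubic factor of `f` with constant term `-1`, and its cofactor a monic cubic with constant term
`-1` as well, since `f(0) = 1`. Comparing the remaining coefficients of
`f = (X³ + pX² + qX - 1)(X³ + rX² + wX - 1)` gives `p + r = 1`, `pr = 0`, `qw = 1` and
`pw + qr = 0`, which have no solution in any integral domain.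
-/

open Polynomial

theorem Multiset.prod_X_sub_C_coeff_zero {R : Type*} [CommRing R] (s : Multiset R) :
    (s.map fun a => X - C a).prod.coeff 0 = (-1) ^ Multiset.card s * s.prod := by
  simp [coeff_zero_eq_eval_zero, eval_multiset_prod, Multiset.map_map]

namespace ThreeRegularExample

variable {R : Type*} [CommRing R]

variable (R) in
noncomputable def sextic : R[X] := X ^ 6 + X ^ 5 - X ^ 4 - 2 * X ^ 3 + X + 1

theorem sextic_map {S : Type*} [CommRing S] (f : R →+* S) : (sextic R).map f = sextic S := by
  simp [sextic]

theorem sextic_monic [Nontrivial R] : (sextic R).Monic := by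
  unfold sextic; monicity!

theorem sextic_natDegree [Nontrivial R] : (sextic R).natDegree = 6 := by
  unfold sextic; compute_degree!

theorem sextic_coeff_zero : (sextic R).coeff 0 = 1 := by
  simp [sextic]

theorem cubic_mul_cubic_ne_sextic [IsDomain R] (p q r w : R) :
    (X ^ 3 + C p * X ^ 2 + C q * X - 1) * (X ^ 3 + C r * X ^ 2 + C w * X - 1) ≠ sextic R := by
  intro h
  have expand : (X ^ 3 + C p * X ^ 2 + C q * X - 1) * (X ^ 3 + C r * X ^ 2 + C w * X - 1) =
      X ^ 6 + C (p + r) * X ^ 5 + C (q + w + p * r) * X ^ 4 + C (p * w + q * r - 2) * X ^ 3 +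
        C (q * w - p - r) * X ^ 2 + C (-q - w) * X + 1 := by
    simp only [map_add, map_sub, map_mul, map_neg, map_ofNat]; ring
  rw [expand, sextic] at h
  have e5 := congrArg (coeff · 5) h
  have e4 := congrArg (coeff · 4) h
  have e3 := congrArg (coeff · 3) h
  have e2 := congrArg (coeff · 2) h
  have e1 := congrArg (coeff · 1) h
  simp only [coeff_add, coeff_sub, coeff_C_mul, coeff_X_pow, coeff_X, coeff_one,
    coeff_ofNat_mul] at e5 e4 e3 e2 e1
  norm_num at e5 e4 e3 e2 e1
  have hpr : p * r = 0 := by linear_combination e4 + e1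
  have hqw : q * w = 1 := by linear_combination e2 + e5
  rcases mul_eq_zero.mp hpr with hp | hr
  · have hq : q = 0 := by linear_combination e3 - q * e5 + q * hp - w * hp
    simp [hq] at hqw
  · have hw : w = 0 := by linear_combination e3 - w * e5 + w * hr - q * hr
    simp [hw] at hqw

theorem not_monic_cubic_dvd_sextic [IsDomain R] {A : R[X]} (hA : A.Monic)
    (hdeg : A.natDegree = 3) (hA0 : A.coeff 0 = -1) : ¬ A ∣ sextic R := by
  rintro ⟨B, hAB⟩
  have hB : B.Monic := hA.of_mul_monic_left (hAB ▸ sextic_monic)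
  have hBdeg : B.natDegree = 3 := by
    have := congrArg natDegree hAB
    rw [hA.natDegree_mul hB, sextic_natDegree, hdeg] at this
    omega
  have hB0 : B.coeff 0 = -1 := by
    have := congrArg (coeff · 0) hAB
    simp only [sextic_coeff_zero, mul_coeff_zero, hA0] at this
    linear_combination this
  rw [hA.as_sum, hB.as_sum, hdeg, hBdeg] at hAB
  simp only [Finset.sum_range_succ, Finset.sum_range_zero, hA0, hB0] at hAB
  refine cubic_mul_cubic_ne_sextic (A.coeff 2) (A.coeff 1) (B.coeff 2) (B.coeff 1) ?_
  rw [hAB]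
  simp only [map_neg, map_one, pow_zero, pow_one, mul_one]
  ring

end ThreeRegularExample

open ThreeRegularExample in
theorem three_regular_example :
    kRegular ℚ (X ^ 6 + X ^ 5 - X ^ 4 - 2 * X ^ 3 + X + 1) 3 := by
  intro s hs hcard hprod
  rw [← sextic, sextic_map] at hs
  refine not_monic_cubic_dvd_sextic (A := (s.map fun a => X - C a).prod) ?_ ?_ ?_ ?_
  · exact monic_multiset_prod_of_monic _ _ fun a _ => monic_X_sub_C a
  · rw [natDegree_multiset_prod_X_sub_C_eq_card, hcard]
  · rw [Multiset.prod_X_sub_C_coeff_zero, hcard, hprod]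
    norm_num
  · exact (Multiset.prod_X_sub_C_dvd_iff_le_roots sextic_monic.ne_zero s).2 hs
end

section
/- A monic integer polynomial f(x) = x^4 + c_3 x^3 + c_2 x^2 + c_1 x + c_0 is a Cappell-Shaneson polynomial if and only if (c_0, c_1, c_2, c_3) equals, for some integer a, one of: (1, a−1, −2a, a), (1, a−1, −2a−2, a), (1, a+1, −2a−2, a), (1, a+1, −2a−4, a). -/
open Polynomial

/-!
For the companion matrix `A` of `f`, `det (1 - A) = f(1)`, which is `2 + c₁ + c₂ + c₃` once
`c₀ = 1`. Writing `⋀²A` in the basis `eᵢ ∧ eⱼ` (`i < j`) and expanding the resulting `6 × 6`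
determinant gives `det (1 - ⋀²A) = -(c₁ - c₃)²`. Hence `f` is Cappell–Shaneson exactly when
`c₁ - c₃ = ±1` and `c₁ + c₂ + c₃ + 2 = ±1`, which are the four families with `a = c₃`.
-/

section

variable {R : Type*} [CommRing R]

theorem det_one_sub_compound_submatrix_cast {m n : ℕ} (h : m = n)
    (A : Matrix (Fin n) (Fin n) R) (k : ℕ) :
    (1 - compound k (A.submatrix (Fin.cast h) (Fin.cast h))).det = (1 - compound k A).det := by
  subst h
  rfl

theorem det_one_sub_submatrix_equiv {ι κ : Type*} [Fintype ι] [DecidableEq ι] [Fintype κ]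
    [DecidableEq κ] (e : ι ≃ κ) (M : Matrix κ κ R) :
    (1 - M.submatrix e e).det = (1 - M).det := by
  rw [← Matrix.det_submatrix_equiv_self e (1 - M), Matrix.submatrix_sub, Pi.sub_apply,
    Pi.sub_apply, Matrix.submatrix_one_equiv]

noncomputable def singletonEquiv (n : ℕ) : Fin n ≃ {s : Finset (Fin n) // s.card = 1} :=
  Equiv.ofBijective (fun i => ⟨{i}, Finset.card_singleton i⟩)
    ⟨fun _ _ h => Finset.singleton_injective (congrArg Subtype.val h),
      fun ⟨_, hs⟩ => (Finset.card_eq_one.mp hs).imp fun _ h => Subtype.ext h.symm⟩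

@[simp]
theorem coe_singletonEquiv_apply {n : ℕ} (i : Fin n) :
    (singletonEquiv n i : Finset (Fin n)) = {i} :=
  rfl

theorem compound_one_submatrix_singletonEquiv {n : ℕ} (A : Matrix (Fin n) (Fin n) R) :
    (compound 1 A).submatrix (singletonEquiv n) (singletonEquiv n) = A := by
  ext i j
  simp [compound, Matrix.det_unique, Finset.coe_orderIsoOfFin_apply]

theorem det_one_sub_compound_one {n : ℕ} (A : Matrix (Fin n) (Fin n) R) :
    (1 - compound 1 A).det = (1 - A).det := by
  rw [← det_one_sub_submatrix_equiv (singletonEquiv n), compound_one_submatrix_singletonEquiv]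

theorem compound_two_apply_pair {n : ℕ} (A : Matrix (Fin n) (Fin n) R) {a b c d : Fin n}
    (hab : a < b) (hcd : c < d) :
    compound 2 A ⟨{a, b}, Finset.card_pair hab.ne⟩ ⟨{c, d}, Finset.card_pair hcd.ne⟩ =
      A a c * A b d - A a d * A b c := by
  have emb {x y : Fin n} (hxy : x < y) :
      ![x, y] = ({x, y} : Finset (Fin n)).orderEmbOfFin (Finset.card_pair hxy.ne) :=
    Finset.orderEmbOfFin_unique _ (fun i => by fin_cases i <;> simp)
      (fun i j hij => by fin_cases i <;> fin_cases j <;> simp_all)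
  simp [compound, Matrix.det_fin_two, Finset.coe_orderIsoOfFin_apply, ← emb hab, ← emb hcd]

def companionFour (c₀ c₁ c₂ c₃ : R) : Matrix (Fin 4) (Fin 4) R :=
  !![0, 1, 0, 0; 0, 0, 1, 0; 0, 0, 0, 1; -c₀, -c₁, -c₂, -c₃]

theorem companion_eq_submatrix_companionFour {f : R[X]} (hf : f.natDegree = 4) :
    companion f = (companionFour (f.coeff 0) (f.coeff 1) (f.coeff 2) (f.coeff 3)).submatrix
      (Fin.cast hf) (Fin.cast hf) := by
  ext ⟨i, hi⟩ ⟨j, hj⟩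
  rw [hf] at hi hj
  interval_cases i <;> interval_cases j <;> simp [companion, companionFour, hf]

theorem det_one_sub_companionFour (c₀ c₁ c₂ c₃ : R) :
    (1 - companionFour c₀ c₁ c₂ c₃).det = 1 + c₀ + c₁ + c₂ + c₃ := by
  have h : 1 - companionFour c₀ c₁ c₂ c₃ =
      !![1, -1, 0, 0; 0, 1, -1, 0; 0, 0, 1, -1; c₀, c₁, c₂, 1 + c₃] := by
    ext i j
    fin_cases i <;> fin_cases j <;> simp [companionFour]
  rw [h]
  simp only [Matrix.det_succ_row_zero, Fin.sum_univ_succ, Fin.sum_univ_zero, Matrix.det_fin_zero,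
    Matrix.submatrix_apply, Fin.succAbove_zero, Fin.succ_succAbove_zero, Fin.succ_succAbove_succ,
    Matrix.of_apply, Matrix.cons_val_succ, Matrix.cons_val_zero, Fin.val_zero, Fin.val_succ]
  ring

noncomputable def pairsEquiv : Fin 6 ≃ {s : Finset (Fin 4) // s.card = 2} :=
  Equiv.ofBijective
    ![⟨{0, 1}, rfl⟩, ⟨{0, 2}, rfl⟩, ⟨{0, 3}, rfl⟩, ⟨{1, 2}, rfl⟩, ⟨{1, 3}, rfl⟩, ⟨{2, 3}, rfl⟩]
    (by decide)

theorem compound_two_companionFour_submatrix_pairsEquiv (c₀ c₁ c₂ c₃ : R) :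
    (compound 2 (companionFour c₀ c₁ c₂ c₃)).submatrix pairsEquiv pairsEquiv =
      !![0, 0, 0, 1, 0, 0;
         0, 0, 0, 0, 1, 0;
         c₀, 0, 0, -c₂, -c₃, 0;
         0, 0, 0, 0, 0, 1;
         0, c₀, 0, c₁, 0, -c₃;
         0, 0, c₀, 0, c₁, c₂] := by
  ext i j
  fin_cases i <;> fin_cases j <;> simp [pairsEquiv, companionFour, compound_two_apply_pair]

theorem det_one_sub_compound_two_companionFour (c₁ c₂ c₃ : R) :
    (1 - compound 2 (companionFour 1 c₁ c₂ c₃)).det = -(c₁ - c₃) ^ 2 := by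
  have h : 1 - (compound 2 (companionFour 1 c₁ c₂ c₃)).submatrix pairsEquiv pairsEquiv =
      !![1, 0, 0, -1, 0, 0;
         0, 1, 0, 0, -1, 0;
         -1, 0, 1, c₂, c₃, 0;
         0, 0, 0, 1, 0, -1;
         0, -1, 0, -c₁, 1, c₃;
         0, 0, -1, 0, -c₁, 1 - c₂] := by
    rw [compound_two_companionFour_submatrix_pairsEquiv]
    ext i j
    fin_cases i <;> fin_cases j <;> simp
  rw [← det_one_sub_submatrix_equiv pairsEquiv, h]
  simp only [Matrix.det_succ_row_zero, Fin.sum_univ_succ, Fin.sum_univ_zero, Matrix.det_fin_zero,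
    Matrix.submatrix_apply, Fin.succAbove_zero, Fin.succ_succAbove_zero, Fin.succ_succAbove_succ,
    Matrix.of_apply, Matrix.cons_val_succ, Matrix.cons_val_zero, Fin.val_zero, Fin.val_succ]
  ring

end

theorem isCSPoly_iff_of_natDegree_eq_four {f : ℤ[X]} (hmonic : f.Monic) (hdeg : f.natDegree = 4) :
    IsCSPoly f ↔ f.coeff 0 = 1 ∧ IsUnit (1 + f.coeff 0 + f.coeff 1 + f.coeff 2 + f.coeff 3) ∧
      IsUnit (f.coeff 1 - f.coeff 3) := by
  have hdet (k : ℕ) : (1 - compound k (companion f)).det =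
      (1 - compound k (companionFour (f.coeff 0) (f.coeff 1) (f.coeff 2) (f.coeff 3))).det := by
    rw [companion_eq_submatrix_companionFour hdeg, det_one_sub_compound_submatrix_cast]
  have forall_one_two (P : ℕ → Prop) : (∀ k, 1 ≤ k → k ≤ 2 → P k) ↔ P 1 ∧ P 2 :=
    ⟨fun h => ⟨h 1 le_rfl one_le_two, h 2 one_le_two le_rfl⟩,
      fun ⟨h1, h2⟩ k hk1 hk2 => by interval_cases k <;> assumption⟩
  simp only [IsCSPoly, hmonic, hdeg, true_and, ← Int.isUnit_iff, hdet, Nat.reduceDiv,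
    forall_one_two, det_one_sub_compound_one, det_one_sub_companionFour,
    Even.neg_one_pow (by decide : Even 4)]
  refine and_congr_right fun h0 => and_congr_right fun _ => ?_
  rw [h0, det_one_sub_compound_two_companionFour, IsUnit.neg_iff, isUnit_pow_iff two_ne_zero]

theorem eq_one_and_isUnit_and_isUnit_iff (c₀ c₁ c₂ c₃ : ℤ) :
    c₀ = 1 ∧ IsUnit (1 + c₀ + c₁ + c₂ + c₃) ∧ IsUnit (c₁ - c₃) ↔ ∃ a : ℤ,
      (c₀, c₁, c₂, c₃) = (1, a - 1, -2 * a, a) ∨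
      (c₀, c₁, c₂, c₃) = (1, a - 1, -2 * a - 2, a) ∨
      (c₀, c₁, c₂, c₃) = (1, a + 1, -2 * a - 2, a) ∨
      (c₀, c₁, c₂, c₃) = (1, a + 1, -2 * a - 4, a) := by
  simp only [Int.isUnit_iff, Prod.mk.injEq]
  constructor
  · intro h
    exact ⟨c₃, by omega⟩
  · rintro ⟨a, h⟩
    omega

theorem csPoly_degree_four_classification (f : Polynomial ℤ)
    (hmonic : f.Monic) (hdeg : f.natDegree = 4) :
    IsCSPoly f ↔ ∃ a : ℤ,
      (f.coeff 0, f.coeff 1, f.coeff 2, f.coeff 3) = (1, a - 1, -2 * a, a) ∨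
      (f.coeff 0, f.coeff 1, f.coeff 2, f.coeff 3) = (1, a - 1, -2 * a - 2, a) ∨
      (f.coeff 0, f.coeff 1, f.coeff 2, f.coeff 3) = (1, a + 1, -2 * a - 2, a) ∨
      (f.coeff 0, f.coeff 1, f.coeff 2, f.coeff 3) = (1, a + 1, -2 * a - 4, a) := by
  rw [isCSPoly_iff_of_natDegree_eq_four hmonic hdeg]
  exact eq_one_and_isUnit_and_isUnit_iff _ _ _ _
end
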